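/- For p₁, p₂ ≥ 2, the Gromov-Hausdorff distance between the metric spaces (Z/p₁Z, d_{p₁}) and (Z/p₂Z, d_{p₂}) is at most |p₁ - p₂|. -/
import Mathlib

open Metric Filter GromovHausdorff

/-- `Z/pZ` with the metric `d_p([n],[m]) = |n₀ - m₀|` given by canonical
representatives, obtained as the metric induced by `[n] ↦ (n₀ : ℝ)`. -/
noncomputable instance ZNmetric (p : ℕ) [NeZero p] : MetricSpace (ZMod p) :=
  MetricSpace.induced (fun x : ZMod p => (x.val : ℝ))
    (fun _ _ h => ZMod.val_injective p (Nat.cast_injective h)) inferInstance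

open Set in
lemma aux_haus (p₁ p₂ : ℕ) [NeZero p₁] [NeZero p₂] (h : p₁ ≤ p₂) :
    hausdorffDist (range fun x : ZMod p₁ => ((x.val : ℝ)))
      (range fun x : ZMod p₂ => ((x.val : ℝ))) ≤ (p₂ : ℝ) - (p₁ : ℝ) := by
  have hp₁ : 0 < p₁ := Nat.pos_of_ne_zero (NeZero.ne p₁)
  apply hausdorffDist_le_of_mem_dist
  · have : (p₁ : ℝ) ≤ p₂ := by exact_mod_cast h
    linarith
  · rintro x ⟨a, rfl⟩
    refine ⟨_, Set.mem_range_self ((a.val : ZMod p₂)), ?_⟩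
    have hv : a.val < p₂ := lt_of_lt_of_le (ZMod.val_lt a) h
    have : (p₁ : ℝ) ≤ p₂ := by exact_mod_cast h
    simp only [ZMod.val_cast_of_lt hv]
    rw [dist_self]
    linarith
  · rintro y ⟨b, rfl⟩
    have hb : b.val < p₂ := ZMod.val_lt b
    set m : ℕ := min b.val (p₁ - 1) with hmdef
    have hm : m < p₁ := lt_of_le_of_lt (min_le_right _ _) (by omega)
    refine ⟨_, Set.mem_range_self ((m : ZMod p₁)), ?_⟩
    simp only [ZMod.val_cast_of_lt hm]
    rw [Real.dist_eq]
    have hmb : m ≤ b.val := min_le_left _ _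
    have hnat : b.val + p₁ ≤ p₂ + m := by omega
    have hcast : (b.val : ℝ) + p₁ ≤ (p₂ : ℝ) + m := by exact_mod_cast hnat
    rw [abs_sub_comm, abs_of_nonpos (sub_nonpos.mpr (by exact_mod_cast hmb))]
    linarith

lemma isom_val (p : ℕ) [NeZero p] : Isometry (fun x : ZMod p => ((x.val : ℝ))) :=
  Isometry.of_dist_eq fun _ _ => rfl

/-- The Gromov-Hausdorff distance between `(Z/p₁Z, d_{p₁})` and `(Z/p₂Z, d_{p₂})` is at
most `|p₁ - p₂|`. -/
theorem stmt_10 (p₁ p₂ : ℕ) (h₁ : 2 ≤ p₁) (h₂ : 2 ≤ p₂) [NeZero p₁] [NeZero p₂] :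
    dist (toGHSpace (ZMod p₁)) (toGHSpace (ZMod p₂)) ≤ |(p₁ : ℝ) - (p₂ : ℝ)| := by
  rcases le_total p₁ p₂ with h | h
  · calc dist (toGHSpace (ZMod p₁)) (toGHSpace (ZMod p₂))
        ≤ hausdorffDist (Set.range fun x : ZMod p₁ => ((x.val : ℝ)))
          (Set.range fun x : ZMod p₂ => ((x.val : ℝ))) :=
        ghDist_le_hausdorffDist (isom_val p₁) (isom_val p₂)
      _ ≤ (p₂ : ℝ) - (p₁ : ℝ) := aux_haus p₁ p₂ h
      _ ≤ |(p₁ : ℝ) - (p₂ : ℝ)| := by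
          rw [abs_sub_comm]; exact le_abs_self _
  · rw [dist_comm]
    calc dist (toGHSpace (ZMod p₂)) (toGHSpace (ZMod p₁))
        ≤ hausdorffDist (Set.range fun x : ZMod p₂ => ((x.val : ℝ)))
          (Set.range fun x : ZMod p₁ => ((x.val : ℝ))) :=
        ghDist_le_hausdorffDist (isom_val p₂) (isom_val p₁)
      _ ≤ (p₁ : ℝ) - (p₂ : ℝ) := aux_haus p₂ p₁ h
      _ ≤ |(p₁ : ℝ) - (p₂ : ℝ)| := le_abs_self _
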